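/- arXiv:1003.0205 — 4 statements merged into one kernel-verified Lean document; each statement's English description precedes it below -/
import Mathlib

section
/- Let $\mathcal T^*$ be a rooted tree with uniform degree $d \geq 2$ and depth $L$, whose $p = d^L$ leaves are the network nodes, and let $\mathcal H^*$ be the hierarchical collection of clusters given by the leaf sets of all subtrees of $\mathcal T^*$ (equivalently, for each vertex of $\mathcal T^*$, the set of leaves below it). Suppose the similarity between leaves $i \neq j$ is $r_{ij} = C \cdot \prod_{\ell = \ell'(i,j)+1}^{L} (\tanh \gamma_\ell)^2$, where $C > 0$, each $\gamma_\ell \in (0,\infty)$, and $\ell'(i,j)$ denotes the level of the root of the smallest subtree of $\mathcal T^*$ containing both $i$ and $j$. Then $\{r_{ij}\}$ satisfies the strict separation condition (for every nested pair $c' \subset c$ in $\mathcal H^*$, the maximum similarity between $i \in c'$ and $j \in c\setminus c'$ is smaller than the minimum similarity within $c'$), and consequently the average-linkage agglomerative clustering algorithm applied to $\{r_{ij}\}$ outputs a hierarchy containing $\mathcal H^*$, i.e., it recovers the tree-structured dependency graph $\mathcal T^*$. -/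
variable {ι : Type*} [Fintype ι] [DecidableEq ι]

/-- Average similarity between two clusters. -/
noncomputable def avgSim (r : ι → ι → ℝ) (c₁ c₂ : Finset ι) : ℝ :=
  (∑ i ∈ c₁, ∑ j ∈ c₂, r i j) / ((c₁.card : ℝ) * c₂.card)

/-- One step of average-linkage agglomerative clustering. -/
def AggloStep (r : ι → ι → ℝ) (C C' : Finset (Finset ι)) : Prop :=
  ∃ c₁ ∈ C, ∃ c₂ ∈ C, c₁ ≠ c₂ ∧
    (∀ c₁' ∈ C, ∀ c₂' ∈ C, c₁' ≠ c₂' → avgSim r c₁' c₂' ≤ avgSim r c₁ c₂) ∧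
    C' = (C \ {c₁, c₂}) ∪ {c₁ ∪ c₂}

/-- `H` is a possible output hierarchy of average-linkage agglomerative clustering on `r`. -/
def IsAggloHierarchy (r : ι → ι → ℝ) (H : Set (Finset ι)) : Prop :=
  ∃ states : List (Finset (Finset ι)),
    states.head? = some (Finset.univ.image fun i => ({i} : Finset ι)) ∧
    states.getLast? = some {Finset.univ} ∧
    states.Chain' (AggloStep r) ∧
    H = {c | ∃ C ∈ states, c ∈ C}

/-- The strict separation condition of Lemma 1 for the collection `Hs`. -/
def SeparationCondition (r : ι → ι → ℝ) (Hs : Set (Finset ι)) : Prop :=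
  ∀ c ∈ Hs, ∀ c' ∈ Hs, c' ⊂ c →
    ∀ i ∈ c', ∀ j ∈ c \ c', ∀ k ∈ c', ∀ l ∈ c', k ≠ l → r i j < r k l

/-- The leaves of the `d`-ary tree of depth `L` below the level-`ℓ` vertex indexed by the
prefix `s`: all leaves (strings of length `L`) extending `s`. -/
def leafCluster (d L : ℕ) (ℓ : ℕ) (hℓ : ℓ ≤ L) (s : Fin ℓ → Fin d) :
    Finset (Fin L → Fin d) :=
  Finset.univ.filter fun x => ∀ k : Fin ℓ, x (Fin.castLE hℓ k) = s k

/-- The hierarchical collection of clusters given by the leaf sets of all subtrees of the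
complete `d`-ary tree of depth `L`. -/
def treeHierarchy (d L : ℕ) : Set (Finset (Fin L → Fin d)) :=
  {c | ∃ (ℓ : ℕ) (hℓ : ℓ ≤ L) (s : Fin ℓ → Fin d), c = leafCluster d L ℓ hℓ s}

/-- The level of the root of the smallest subtree containing the two leaves `i` and `j`:
the length of their longest common prefix. -/
def lcpLevel (d L : ℕ) (i j : Fin L → Fin d) : ℕ :=
  ((Finset.range (L + 1)).filter fun m => ∀ k : Fin L, (k : ℕ) < m → i k = j k).max'
    ⟨0, by simp⟩

/-! The similarity of two leaves is a strictly increasing function of the depth of their lowest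
common ancestor, so leaves inside a subtree are more similar to each other than to any leaf
outside it: this is the separation condition. Separation forces average linkage to respect every
cluster `c` of the hierarchy. As long as each current cluster lies inside `c` or outside it,
merging a proper part of `c` with an outside cluster is never optimal, since merging that part
with another part of `c` has strictly larger average similarity. Hence the first merge that
breaks this property joins `c` itself to an outside cluster, so `c` was a cluster then. -/

theorem List.IsChain.exists_step_of_head?_of_getLast? {α : Type*} {R : α → α → Prop}
    {p : α → Prop} {l : List α} (hl : l.IsChain R) {a b : α} (ha : l.head? = some a)
    (hb : l.getLast? = some b) (hpa : p a) (hpb : ¬ p b) :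
    ∃ x ∈ l, ∃ y, R x y ∧ p x ∧ ¬ p y := by
  induction l generalizing a with
  | nil => simp at ha
  | cons x t ih =>
    obtain rfl : x = a := by simpa using ha
    rcases t with _ | ⟨y, t⟩
    · obtain rfl : x = b := by simpa using hb
      exact absurd hpa hpb
    obtain ⟨hxy, hl'⟩ := List.isChain_cons_cons.1 hl
    by_cases hpy : p y
    · obtain ⟨u, hu, v, huv⟩ := ih hl' rfl (by simpa using hb) hpy
      exact ⟨u, List.mem_cons_of_mem _ hu, v, huv⟩
    · exact ⟨x, List.mem_cons_self, y, hxy, hpa, hpy⟩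

section Agglomerative

variable {α : Type*} {r : α → α → ℝ}

theorem avgSim_comm (hsymm : ∀ i j, r i j = r j i) (c₁ c₂ : Finset α) :
    avgSim r c₁ c₂ = avgSim r c₂ c₁ := by
  rw [avgSim, avgSim, Finset.sum_comm, mul_comm]
  simp only [hsymm]

theorem avgSim_lt_of_forall_lt {c₁ c₂ : Finset α} {m : ℝ} (h₁ : c₁.Nonempty)
    (h₂ : c₂.Nonempty) (h : ∀ i ∈ c₁, ∀ j ∈ c₂, r i j < m) : avgSim r c₁ c₂ < m := by
  have : 0 < (c₁.card : ℝ) * c₂.card :=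
    mul_pos (by exact_mod_cast h₁.card_pos) (by exact_mod_cast h₂.card_pos)
  rw [avgSim, div_lt_iff₀ this]
  calc ∑ i ∈ c₁, ∑ j ∈ c₂, r i j < ∑ _i ∈ c₁, ∑ _j ∈ c₂, m :=
        Finset.sum_lt_sum_of_nonempty h₁ fun i hi => Finset.sum_lt_sum_of_nonempty h₂ (h i hi)
    _ = m * (c₁.card * c₂.card) := by simp only [Finset.sum_const, nsmul_eq_mul]; ring

theorem le_avgSim_of_forall_le {c₁ c₂ : Finset α} {m : ℝ} (h₁ : c₁.Nonempty)
    (h₂ : c₂.Nonempty) (h : ∀ i ∈ c₁, ∀ j ∈ c₂, m ≤ r i j) : m ≤ avgSim r c₁ c₂ := by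
  have : 0 < (c₁.card : ℝ) * c₂.card :=
    mul_pos (by exact_mod_cast h₁.card_pos) (by exact_mod_cast h₂.card_pos)
  rw [avgSim, le_div_iff₀ this]
  calc m * (c₁.card * c₂.card) = ∑ _i ∈ c₁, ∑ _j ∈ c₂, m := by
        simp only [Finset.sum_const, nsmul_eq_mul]; ring
    _ ≤ ∑ i ∈ c₁, ∑ j ∈ c₂, r i j :=
        Finset.sum_le_sum fun i hi => Finset.sum_le_sum (h i hi)

theorem avgSim_lt_avgSim {c₁ c₂ c₃ c₄ : Finset α} (h₁ : c₁.Nonempty) (h₂ : c₂.Nonempty)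
    (h₃ : c₃.Nonempty) (h₄ : c₄.Nonempty)
    (h : ∀ i ∈ c₁, ∀ j ∈ c₂, ∀ k ∈ c₃, ∀ l ∈ c₄, r i j < r k l) :
    avgSim r c₁ c₂ < avgSim r c₃ c₄ := by
  obtain ⟨⟨k, l⟩, hkl, hmin⟩ :=
    (c₃ ×ˢ c₄).exists_min_image (fun p => r p.1 p.2) (h₃.product h₄)
  rw [Finset.mem_product] at hkl
  exact (avgSim_lt_of_forall_lt h₁ h₂ fun i hi j hj => h i hi j hj k hkl.1 l hkl.2).trans_le
    (le_avgSim_of_forall_le h₃ h₄ fun k' hk' l' hl' => hmin (k', l') (Finset.mk_mem_product hk' hl'))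

structure IsClusterPartition (Cs : Finset (Finset α)) : Prop where
  nonempty : ∀ c ∈ Cs, c.Nonempty
  disjoint : ∀ c ∈ Cs, ∀ c' ∈ Cs, c ≠ c' → Disjoint c c'
  exists_mem : ∀ x, ∃ c ∈ Cs, x ∈ c

theorem isClusterPartition_singletons [Fintype α] [DecidableEq α] :
    IsClusterPartition (Finset.univ.image fun i : α => ({i} : Finset α)) where
  nonempty := by simp
  disjoint := by
    simp only [Finset.mem_image, Finset.mem_univ, true_and]
    rintro _ ⟨i, rfl⟩ _ ⟨j, rfl⟩ hij
    exact Finset.disjoint_singleton.2 fun h => hij (h ▸ rfl)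
  exists_mem x := ⟨{x}, by simp⟩

theorem IsClusterPartition.merge [DecidableEq α] {Cs : Finset (Finset α)}
    (hCs : IsClusterPartition Cs) {c₁ c₂ : Finset α} (hc₁ : c₁ ∈ Cs) (hc₂ : c₂ ∈ Cs)
    (h₁₂ : c₁ ≠ c₂) : IsClusterPartition ((Cs \ {c₁, c₂}) ∪ {c₁ ∪ c₂}) := by
  have hmem : ∀ c, c ∈ (Cs \ {c₁, c₂}) ∪ {c₁ ∪ c₂} ↔ (c ∈ Cs ∧ c ≠ c₁ ∧ c ≠ c₂) ∨ c = c₁ ∪ c₂ := by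
    simp [or_comm]
  refine ⟨fun c hc => ?_, fun c hc c' hc' hcc' => ?_, fun x => ?_⟩
  · rcases (hmem c).1 hc with ⟨hc, -⟩ | rfl
    exacts [hCs.nonempty c hc, (hCs.nonempty c₁ hc₁).mono Finset.subset_union_left]
  · rcases (hmem c).1 hc with ⟨hc, h₁, h₂⟩ | rfl <;>
      rcases (hmem c').1 hc' with ⟨hc', h₁', h₂'⟩ | rfl
    · exact hCs.disjoint c hc c' hc' hcc'
    · exact Finset.disjoint_union_right.2
        ⟨hCs.disjoint c hc c₁ hc₁ h₁, hCs.disjoint c hc c₂ hc₂ h₂⟩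
    · exact Finset.disjoint_union_left.2
        ⟨hCs.disjoint c₁ hc₁ c' hc' h₁'.symm, hCs.disjoint c₂ hc₂ c' hc' h₂'.symm⟩
    · exact absurd rfl hcc'
  · obtain ⟨c, hc, hxc⟩ := hCs.exists_mem x
    by_cases h : c = c₁ ∨ c = c₂
    · refine ⟨c₁ ∪ c₂, (hmem _).2 (Or.inr rfl), ?_⟩
      rcases h with rfl | rfl <;> simp [hxc]
    · rw [not_or] at h
      exact ⟨c, (hmem c).2 (Or.inl ⟨hc, h⟩), hxc⟩

theorem IsClusterPartition.of_aggloStep [DecidableEq α] {Cs Cs' : Finset (Finset α)}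
    (hCs : IsClusterPartition Cs) (hstep : AggloStep r Cs Cs') : IsClusterPartition Cs' := by
  obtain ⟨c₁, hc₁, c₂, hc₂, h₁₂, -, rfl⟩ := hstep
  exact hCs.merge hc₁ hc₂ h₁₂

theorem isClusterPartition_of_mem_states [Fintype α] [DecidableEq α]
    {states : List (Finset (Finset α))} (hchain : states.IsChain (AggloStep r))
    (hhead : states.head? = some (Finset.univ.image fun i : α => ({i} : Finset α))) :
    ∀ Cs ∈ states, IsClusterPartition Cs :=
  hchain.induction _ _ (fun _ _ hstep hCs => hCs.of_aggloStep hstep) fun hne => by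
    rw [List.head?_eq_some_head hne, Option.some_inj] at hhead
    exact hhead ▸ isClusterPartition_singletons

theorem IsAggloHierarchy.univ_nonempty [Fintype α] [DecidableEq α] {H : Set (Finset α)}
    (hH : IsAggloHierarchy r H) : (Finset.univ : Finset α).Nonempty := by
  obtain ⟨states, hhead, hlast, hchain, -⟩ := hH
  exact (isClusterPartition_of_mem_states hchain hhead _ (List.mem_of_mem_getLast? hlast)).nonempty
    _ (Finset.mem_singleton_self _)

/-- For a partition `Cs`, this says that `c` is a union of clusters of `Cs`. -/
def RespectsCluster (c : Finset α) (Cs : Finset (Finset α)) : Prop :=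
  ∀ e ∈ Cs, e ⊆ c ∨ Disjoint e c

theorem respectsCluster_singletons [Fintype α] [DecidableEq α] (c : Finset α) :
    RespectsCluster c (Finset.univ.image fun i : α => ({i} : Finset α)) := by
  simp only [RespectsCluster, Finset.mem_image, Finset.mem_univ, true_and]
  rintro _ ⟨i, rfl⟩
  by_cases hi : i ∈ c
  exacts [Or.inl (Finset.singleton_subset_iff.2 hi), Or.inr (Finset.disjoint_singleton_left.2 hi)]

section Separation

variable [Fintype α] [DecidableEq α] {Hs : Set (Finset α)} {c : Finset α}

theorem avgSim_lt_of_separationCondition (hsep : SeparationCondition r Hs)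
    (huniv : Finset.univ ∈ Hs) (hc : c ∈ Hs) {a b e : Finset α} (ha : a.Nonempty)
    (hb : b.Nonempty) (he : e.Nonempty) (hac : a ⊆ c) (hbc : Disjoint b c) (hec : e ⊆ c)
    (hae : Disjoint a e) : avgSim r a b < avgSim r a e := by
  have hc_ssubset : c ⊂ Finset.univ := by
    obtain ⟨x, hx⟩ := hb
    exact Finset.ssubset_univ_iff.2 fun h => Finset.disjoint_left.1 hbc hx (h ▸ Finset.mem_univ x)
  refine avgSim_lt_avgSim ha hb ha he fun i hi j hj k hk l hl => ?_
  exact hsep _ huniv c hc hc_ssubset i (hac hi) j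
    (Finset.mem_sdiff.2 ⟨Finset.mem_univ j, Finset.disjoint_left.1 hbc hj⟩) k (hac hk) l (hec hl)
    (Finset.disjoint_left.1 hae hk <| · ▸ hl)

/-- Otherwise the cluster of a point of `c \ a` lies inside `c`, and separation makes it
strictly more similar to `a` than `b` is. -/
theorem eq_of_avgSim_maximal (hsep : SeparationCondition r Hs) (huniv : Finset.univ ∈ Hs)
    (hc : c ∈ Hs) {Cs : Finset (Finset α)} (hCs : IsClusterPartition Cs)
    (hresp : RespectsCluster c Cs) {a b : Finset α} (ha : a ∈ Cs) (hb : b ∈ Cs)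
    (hmax : ∀ e ∈ Cs, a ≠ e → avgSim r a e ≤ avgSim r a b) (hac : a ⊆ c)
    (hbc : Disjoint b c) : a = c := by
  by_contra hne
  obtain ⟨x, hxc, hxa⟩ := Finset.exists_of_ssubset (hac.ssubset_of_ne hne)
  obtain ⟨e, he, hxe⟩ := hCs.exists_mem x
  have hec : e ⊆ c := (hresp e he).resolve_right fun h => Finset.disjoint_left.1 h hxe hxc
  have hae : a ≠ e := fun h => hxa (h ▸ hxe)
  exact (hmax e he hae).not_gt <| avgSim_lt_of_separationCondition hsep huniv hc
    (hCs.nonempty a ha) (hCs.nonempty b hb) ⟨x, hxe⟩ hac hbc hec (hCs.disjoint a ha e he hae)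

theorem mem_of_aggloStep_of_not_respectsCluster (hsymm : ∀ i j, r i j = r j i)
    (hsep : SeparationCondition r Hs) (huniv : Finset.univ ∈ Hs) (hc : c ∈ Hs)
    {Cs Cs' : Finset (Finset α)} (hCs : IsClusterPartition Cs) (hresp : RespectsCluster c Cs)
    (hstep : AggloStep r Cs Cs') (hresp' : ¬ RespectsCluster c Cs') : c ∈ Cs := by
  obtain ⟨a, ha, b, hb, -, hmax, rfl⟩ := hstep
  have hmerged : ¬ (a ∪ b ⊆ c ∨ Disjoint (a ∪ b) c) := by
    refine fun h => hresp' fun e he => ?_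
    simp only [Finset.mem_union, Finset.mem_sdiff, Finset.mem_singleton] at he
    rcases he with ⟨he, -⟩ | rfl
    exacts [hresp e he, h]
  rcases hresp a ha with hac | hac <;> rcases hresp b hb with hbc | hbc
  · exact absurd (Or.inl (Finset.union_subset hac hbc)) hmerged
  · exact eq_of_avgSim_maximal hsep huniv hc hCs hresp ha hb
      (fun e he hae => hmax a ha e he hae) hac hbc ▸ ha
  · refine eq_of_avgSim_maximal hsep huniv hc hCs hresp hb ha (fun e he hbe => ?_) hbc hac ▸ hb
    rw [avgSim_comm hsymm b a]
    exact hmax b hb e he hbe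
  · exact absurd (Or.inr (Finset.disjoint_union_left.2 ⟨hac, hbc⟩)) hmerged

theorem mem_of_isAggloHierarchy (hsymm : ∀ i j, r i j = r j i)
    (hsep : SeparationCondition r Hs) (huniv : Finset.univ ∈ Hs) {H : Set (Finset α)}
    (hH : IsAggloHierarchy r H) (hc : c ∈ Hs) (hne : c.Nonempty) : c ∈ H := by
  obtain ⟨states, hhead, hlast, hchain, rfl⟩ := hH
  by_cases hend : RespectsCluster c {Finset.univ}
  · have : c = Finset.univ := by
      rcases hend _ (Finset.mem_singleton_self _) with h | h
      · exact Finset.univ_subset_iff.1 h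
      · obtain ⟨x, hx⟩ := hne
        exact absurd (Finset.mem_univ x) (Finset.disjoint_right.1 h hx)
    exact ⟨_, List.mem_of_mem_getLast? hlast, this ▸ Finset.mem_singleton_self _⟩
  · obtain ⟨Cs, hCs, Cs', hstep, hresp, hresp'⟩ :=
      hchain.exists_step_of_head?_of_getLast? hhead hlast (respectsCluster_singletons c) hend
    exact ⟨Cs, hCs, mem_of_aggloStep_of_not_respectsCluster hsymm hsep huniv hc
      (isClusterPartition_of_mem_states hchain hhead Cs hCs) hresp hstep hresp'⟩

end Separation

end Agglomerative

theorem Real.tanh_pos {x : ℝ} (hx : 0 < x) : 0 < Real.tanh x := by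
  rw [Real.tanh_eq_sinh_div_cosh]
  exact div_pos (Real.sinh_pos_iff.2 hx) (Real.cosh_pos x)

theorem strictMonoOn_prod_Icc {f : ℕ → ℝ} (hf₀ : ∀ n, 0 < f n) (hf₁ : ∀ n, f n < 1) (L : ℕ) :
    StrictMonoOn (fun m => ∏ n ∈ Finset.Icc (m + 1) L, f n) (Set.Iic L) := by
  rintro m₁ - m₂ hm₂ h
  simp only [Finset.Icc_add_one_left_eq_Ioc]
  rw [← Finset.prod_Ioc_consecutive f h.le hm₂]
  refine mul_lt_of_lt_one_left (Finset.prod_pos fun n _ => hf₀ n) ?_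
  calc ∏ n ∈ Finset.Ioc m₁ m₂, f n ≤ ∏ n ∈ {m₂}, f n :=
        Finset.prod_le_prod_of_subset_of_le_one (by simp [h]) (fun n _ => (hf₀ n).le)
          fun n _ _ => (hf₁ n).le
    _ < 1 := by simpa using hf₁ m₂

section Tree

variable {d L : ℕ}

theorem le_lcpLevel_iff {i j : Fin L → Fin d} {m : ℕ} :
    m ≤ lcpLevel d L i j ↔ m ≤ L ∧ ∀ k : Fin L, (k : ℕ) < m → i k = j k := by
  set s := (Finset.range (L + 1)).filter fun m => ∀ k : Fin L, (k : ℕ) < m → i k = j k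
  have hmax : lcpLevel d L i j ∈ s := Finset.max'_mem s _
  rw [Finset.mem_filter, Finset.mem_range, Nat.lt_succ_iff] at hmax
  refine ⟨fun h => ⟨h.trans hmax.1, fun k hk => hmax.2 k (hk.trans_le h)⟩, fun h => ?_⟩
  exact Finset.le_max' s m (Finset.mem_filter.2 ⟨Finset.mem_range.2 (Nat.lt_succ_of_le h.1), h.2⟩)

theorem lcpLevel_le (i j : Fin L → Fin d) : lcpLevel d L i j ≤ L :=
  (le_lcpLevel_iff.1 le_rfl).1

theorem lcpLevel_comm (i j : Fin L → Fin d) : lcpLevel d L i j = lcpLevel d L j i :=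
  eq_of_forall_le_iff fun m => by simp only [le_lcpLevel_iff, @eq_comm _ (i _)]

theorem mem_leafCluster {ℓ : ℕ} {hℓ : ℓ ≤ L} {s : Fin ℓ → Fin d} {x : Fin L → Fin d} :
    x ∈ leafCluster d L ℓ hℓ s ↔ ∀ k : Fin ℓ, x (Fin.castLE hℓ k) = s k := by
  simp [leafCluster]

theorem mem_leafCluster_iff_le_lcpLevel {ℓ : ℕ} {hℓ : ℓ ≤ L} {s : Fin ℓ → Fin d}
    {i j : Fin L → Fin d} (hi : i ∈ leafCluster d L ℓ hℓ s) :
    j ∈ leafCluster d L ℓ hℓ s ↔ ℓ ≤ lcpLevel d L i j := by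
  rw [mem_leafCluster] at hi ⊢
  rw [le_lcpLevel_iff]
  refine ⟨fun hj => ⟨hℓ, fun k hk => ?_⟩, fun h k => ?_⟩
  · have hk' : Fin.castLE hℓ ⟨k, hk⟩ = k := rfl
    rw [← hk', hi, hj]
  · rw [← hi, h.2 _ k.isLt]

theorem leafCluster_nonempty {ℓ : ℕ} (hℓ : ℓ ≤ L) (s : Fin ℓ → Fin d) (x : Fin L → Fin d) :
    (leafCluster d L ℓ hℓ s).Nonempty := by
  refine ⟨fun k => if h : (k : ℕ) < ℓ then s ⟨k, h⟩ else x k, mem_leafCluster.2 fun k => ?_⟩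
  simp

theorem univ_mem_treeHierarchy : Finset.univ ∈ treeHierarchy d L :=
  ⟨0, L.zero_le, Fin.elim0, by ext; simp [leafCluster]⟩

theorem separationCondition_treeHierarchy {r : (Fin L → Fin d) → (Fin L → Fin d) → ℝ}
    {g : ℕ → ℝ} (hg : StrictMonoOn g (Set.Iic L))
    (hr : ∀ i j, i ≠ j → r i j = g (lcpLevel d L i j)) :
    SeparationCondition r (treeHierarchy d L) := by
  rintro c - c' ⟨ℓ, hℓ, s, rfl⟩ - i hi j hj k hk l hl hkl
  rw [Finset.mem_sdiff] at hj
  have hij : i ≠ j := fun h => hj.2 (h ▸ hi)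
  rw [hr i j hij, hr k l hkl]
  refine hg (lcpLevel_le i j) (lcpLevel_le k l) ?_
  exact (not_le.1 ((mem_leafCluster_iff_le_lcpLevel hi).not.1 hj.2)).trans_le
    ((mem_leafCluster_iff_le_lcpLevel hk).1 hl)

end Tree

theorem tree_similarity_separation_and_recovery_general (d L : ℕ)
    (C : ℝ) (hC : 0 < C) (γ : ℕ → ℝ) (hγ : ∀ ℓ, 0 < γ ℓ)
    (r : (Fin L → Fin d) → (Fin L → Fin d) → ℝ)
    (hr : ∀ i j, i ≠ j →
      r i j = C * ∏ ℓ ∈ Finset.Icc (lcpLevel d L i j + 1) L, (Real.tanh (γ ℓ)) ^ 2) :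
    SeparationCondition r (treeHierarchy d L) ∧
    ∀ H, IsAggloHierarchy r H → treeHierarchy d L ⊆ H := by
  have hsymm : ∀ i j, r i j = r j i := fun i j => by
    obtain rfl | hij := eq_or_ne i j
    · rfl
    · rw [hr i j hij, hr j i hij.symm, lcpLevel_comm]
  have hmono : StrictMonoOn (fun m => C * ∏ ℓ ∈ Finset.Icc (m + 1) L, Real.tanh (γ ℓ) ^ 2)
      (Set.Iic L) := fun m₁ h₁ m₂ h₂ h => mul_lt_mul_of_pos_left
    (strictMonoOn_prod_Icc (fun ℓ => pow_pos (Real.tanh_pos (hγ ℓ)) 2)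
      (fun ℓ => Real.tanh_sq_lt_one _) L h₁ h₂ h) hC
  have hsep := separationCondition_treeHierarchy hmono hr
  refine ⟨hsep, fun H hH c hc => ?_⟩
  obtain ⟨x, -⟩ := hH.univ_nonempty
  obtain ⟨ℓ, hℓ, s, rfl⟩ := id hc
  exact mem_of_isAggloHierarchy hsymm hsep univ_mem_treeHierarchy hH hc
    (leafCluster_nonempty hℓ s x)

/-- **Proposition 1.** If the similarity between distinct leaves `i ≠ j` of a
complete `d`-ary tree of depth `L` is `r i j = C ∏_{ℓ=ℓ'(i,j)+1}^{L} (tanh γ_ℓ)²` with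
`C > 0` and `γ_ℓ ∈ (0,∞)`, where `ℓ'(i,j)` is the level of the smallest subtree containing
`i` and `j`, then `r` satisfies the strict separation condition for the tree hierarchy, and
consequently average-linkage agglomerative clustering recovers the tree: every output
hierarchy contains all subtree leaf-clusters. -/
theorem tree_similarity_separation_and_recovery (d L : ℕ) (hd : 2 ≤ d)
    (C : ℝ) (hC : 0 < C) (γ : ℕ → ℝ) (hγ : ∀ ℓ, 0 < γ ℓ)
    (r : (Fin L → Fin d) → (Fin L → Fin d) → ℝ)
    (hr : ∀ i j, i ≠ j →
      r i j = C * ∏ ℓ ∈ Finset.Icc (lcpLevel d L i j + 1) L, (Real.tanh (γ ℓ)) ^ 2) :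
    SeparationCondition r (treeHierarchy d L) ∧
    ∀ H, IsAggloHierarchy r H → treeHierarchy d L ⊆ H :=
  tree_similarity_separation_and_recovery_general d L C hC γ hγ r hr
end

section
/- Consider the edge-flip representation of the constrained tree Ising model on a rooted tree of uniform degree $d \geq 2$ and depth $L = \log_d p$: the root has value $0$; flip probabilities are $q_\ell = 0$ for $\ell < \ell_0$ and $q_\ell = \frac{1}{1+d^{\beta\ell}}$ for $\ell \geq \ell_0$, where $\ell_0 = \frac{\alpha}{\beta}L$ is an integer and $0 < \alpha < \beta \leq 1$. Let $\|\mathbf x\|_0 = A_L$ be the number of active leaves. Then $\mathbb E[\|\mathbf x\|_0] \leq (L+1)\, p^{1-\alpha}$, i.e., $\mathbb E[\|\mathbf x\|_0] \leq (\log_d p + 1)\, p^{1-\alpha}$. -/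
open MeasureTheory ProbabilityTheory Finset

/-- Vertices at level `ℓ` of the complete `d`-ary tree are indexed by strings
`s : Fin ℓ → Fin d`; `F ℓ s ω = true` means vertex `s` disagrees with its parent.
`pathFlipCount` counts the disagreeing edges on the path from the root to `s`. -/
def pathFlipCount (d : ℕ) {Ω : Type*} (F : (ℓ : ℕ) → (Fin ℓ → Fin d) → Ω → Bool)
    (ℓ : ℕ) (s : Fin ℓ → Fin d) (ω : Ω) : ℕ :=
  ((Finset.Icc 1 ℓ).filter fun k =>
    (if h : k ≤ ℓ then F k (fun i => s (Fin.castLE h i)) ω else false) = true).card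

/-- `A_ℓ`: the number of value-`1` vertices at level `ℓ` (the root has value `0`, and an
edge flips the value exactly when it disagrees). -/
def activeCount (d : ℕ) {Ω : Type*} (F : (ℓ : ℕ) → (Fin ℓ → Fin d) → Ω → Bool)
    (ℓ : ℕ) (ω : Ω) : ℕ :=
  (Finset.univ.filter fun s : Fin ℓ → Fin d => pathFlipCount d F ℓ s ω % 2 = 1).card

/-- The edge-flip representation of the constrained tree Ising model of Theorem 2:
the edge disagreement indicators are independent, and a level-`ℓ` vertex disagrees with
its parent with probability `q_ℓ = 0` for `ℓ < ℓ₀` and `q_ℓ = 1/(1+d^{βℓ})` for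
`ℓ ≥ ℓ₀`. -/
def IsConstrainedFlipModel (d L ℓ₀ : ℕ) (β : ℝ) {Ω : Type}
    [MeasurableSpace Ω] (μ : Measure Ω)
    (F : (ℓ : ℕ) → (Fin ℓ → Fin d) → Ω → Bool) : Prop :=
  (∀ ℓ s, Measurable fun ω => F ℓ s ω) ∧
  iIndepFun
    (fun v : Σ ℓ : ℕ, Fin ℓ → Fin d => fun ω => F v.1 v.2 ω) μ ∧
  (∀ ℓ, 1 ≤ ℓ → ℓ ≤ L → ∀ s : Fin ℓ → Fin d,
    μ {ω | F ℓ s ω = true} =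
      ENNReal.ofReal (if ℓ < ℓ₀ then 0 else 1 / (1 + (d : ℝ) ^ (β * ℓ))))

/-!
A leaf is active only if some edge on its root path flips, so by the union bound its
activation probability is at most `L` times the largest flip probability. Below level `ℓ₀`
edges never flip, and from level `ℓ₀` on `q_ℓ ≤ d^{-βℓ} ≤ d^{-βℓ₀} = p^{-α}`; summing over
the `p` leaves gives `E‖x‖₀ ≤ L p^{1-α}`.
-/

section FlipCount

variable {d : ℕ} {Ω : Type*} {F : (ℓ : ℕ) → (Fin ℓ → Fin d) → Ω → Bool}

theorem exists_flip_of_pathFlipCount_ne_zero {ℓ : ℕ} {s : Fin ℓ → Fin d} {ω : Ω}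
    (h : pathFlipCount d F ℓ s ω ≠ 0) :
    ∃ k ∈ Icc 1 ℓ, ∃ hk : k ≤ ℓ, F k (fun i => s (Fin.castLE hk i)) ω = true := by
  obtain ⟨k, hk⟩ := Finset.card_ne_zero.mp h
  obtain ⟨hk, hflip⟩ := Finset.mem_filter.mp hk
  have hkℓ : k ≤ ℓ := (Finset.mem_Icc.mp hk).2
  exact ⟨k, hk, hkℓ, by simpa only [dif_pos hkℓ] using hflip⟩

variable [MeasurableSpace Ω]

theorem measurable_pathFlipCount (hF : ∀ ℓ s, Measurable (F ℓ s)) (ℓ : ℕ)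
    (s : Fin ℓ → Fin d) : Measurable (pathFlipCount d F ℓ s) := by
  unfold pathFlipCount
  simp only [Finset.card_filter]
  refine Finset.measurable_sum _ fun k hk => ?_
  simp only [dif_pos (Finset.mem_Icc.mp hk).2]
  exact (measurable_from_top (f := fun b : Bool => if b = true then 1 else 0)).comp (hF k _)

theorem integral_activeCount_eq_sum (μ : Measure Ω) [IsFiniteMeasure μ]
    (hF : ∀ ℓ s, Measurable (F ℓ s)) (ℓ : ℕ) :
    ∫ ω, (activeCount d F ℓ ω : ℝ) ∂μ =
      ∑ s : Fin ℓ → Fin d, μ.real {ω | pathFlipCount d F ℓ s ω % 2 = 1} := by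
  have hmeas : ∀ s, MeasurableSet {ω | pathFlipCount d F ℓ s ω % 2 = 1} := fun s =>
    measurable_pathFlipCount hF ℓ s (MeasurableSet.of_discrete (s := {n : ℕ | n % 2 = 1}))
  calc ∫ ω, (activeCount d F ℓ ω : ℝ) ∂μ
      = ∫ ω, ∑ s, {ω | pathFlipCount d F ℓ s ω % 2 = 1}.indicator 1 ω ∂μ := by
        simp only [activeCount, Finset.card_filter, Nat.cast_sum, Nat.cast_ite, Nat.cast_one,
          Nat.cast_zero, Set.indicator_apply, Set.mem_ofPred_eq, Pi.one_apply]
    _ = ∑ s, ∫ ω, {ω | pathFlipCount d F ℓ s ω % 2 = 1}.indicator 1 ω ∂μ :=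
        integral_finsetSum _ fun s _ => (integrable_const (1 : ℝ)).indicator (hmeas s)
    _ = _ := by simp only [integral_indicator_one (hmeas _)]

theorem measureReal_pathFlipCount_odd_le (μ : Measure Ω) [IsFiniteMeasure μ] {ℓ : ℕ} {q : ℝ}
    (hq : ∀ k, 1 ≤ k → k ≤ ℓ → ∀ t, μ.real {ω | F k t ω = true} ≤ q) (s : Fin ℓ → Fin d) :
    μ.real {ω | pathFlipCount d F ℓ s ω % 2 = 1} ≤ ℓ * q := by
  let flip : ℕ → Set Ω := fun k =>
    {ω | ∃ hk : k ≤ ℓ, F k (fun i => s (Fin.castLE hk i)) ω = true}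
  have hsub : {ω | pathFlipCount d F ℓ s ω % 2 = 1} ⊆ ⋃ k ∈ Icc 1 ℓ, flip k := by
    intro ω (hω : pathFlipCount d F ℓ s ω % 2 = 1)
    obtain ⟨k, hk, hflip⟩ :=
      exists_flip_of_pathFlipCount_ne_zero (show pathFlipCount d F ℓ s ω ≠ 0 by omega)
    exact Set.mem_biUnion hk hflip
  have hflip : ∀ k ∈ Icc 1 ℓ, μ.real (flip k) ≤ q := by
    intro k hk
    obtain ⟨hk1, hkℓ⟩ := Finset.mem_Icc.mp hk
    simpa only [flip, exists_prop_of_true hkℓ] using hq k hk1 hkℓ _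
  calc μ.real {ω | pathFlipCount d F ℓ s ω % 2 = 1}
      ≤ μ.real (⋃ k ∈ Icc 1 ℓ, flip k) := measureReal_mono hsub (measure_ne_top _ _)
    _ ≤ ∑ k ∈ Icc 1 ℓ, μ.real (flip k) := measureReal_biUnion_finset_le _ _
    _ ≤ ∑ _k ∈ Icc 1 ℓ, q := Finset.sum_le_sum hflip
    _ = ℓ * q := by simp

theorem integral_activeCount_le (μ : Measure Ω) [IsFiniteMeasure μ]
    (hF : ∀ ℓ s, Measurable (F ℓ s)) {ℓ : ℕ} {q : ℝ}
    (hq : ∀ k, 1 ≤ k → k ≤ ℓ → ∀ t, μ.real {ω | F k t ω = true} ≤ q) :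
    ∫ ω, (activeCount d F ℓ ω : ℝ) ∂μ ≤ (d : ℝ) ^ ℓ * (ℓ * q) := by
  rw [integral_activeCount_eq_sum μ hF]
  calc _ ≤ ∑ _s : Fin ℓ → Fin d, (ℓ * q : ℝ) :=
        Finset.sum_le_sum fun s _ => measureReal_pathFlipCount_odd_le μ hq s
    _ = (d : ℝ) ^ ℓ * (ℓ * q) := by simp

end FlipCount

theorem constrainedFlipProb_le {x β : ℝ} (hx : 1 ≤ x) (hβ : 0 ≤ β) {k ℓ₀ : ℕ} :
    (if k < ℓ₀ then 0 else 1 / (1 + x ^ (β * k))) ≤ x ^ (-(β * ℓ₀)) := by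
  split_ifs with hk
  · positivity
  · calc 1 / (1 + x ^ (β * k)) ≤ 1 / x ^ (β * k) := by gcongr; linarith
      _ = x ^ (-(β * k)) := by rw [Real.rpow_neg (by linarith), one_div]
      _ ≤ x ^ (-(β * ℓ₀)) := by
        gcongr
        exact_mod_cast not_lt.mp hk

theorem constrained_ising_expected_sparsity_upper_general (d : ℕ) (hd : 2 ≤ d) (α β : ℝ)
    (hα : 0 < α) (hαβ : α < β) :
    ∀ L ℓ₀ : ℕ, (ℓ₀ : ℝ) * β = α * L →
      ∀ (Ω : Type) (mΩ : MeasurableSpace Ω) (μ : Measure Ω), IsProbabilityMeasure μ →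
      ∀ F : (ℓ : ℕ) → (Fin ℓ → Fin d) → Ω → Bool, IsConstrainedFlipModel d L ℓ₀ β μ F →
        ∫ ω, (activeCount d F L ω : ℝ) ∂μ ≤ ((L : ℝ) + 1) * ((d : ℝ) ^ L) ^ (1 - α) := by
  rintro L ℓ₀ hℓ₀ Ω _ μ hμ F ⟨hmeas, -, hprob⟩
  have hd0 : (0 : ℝ) < d := by positivity
  have hp : (d : ℝ) ^ (-(β * ℓ₀)) = ((d : ℝ) ^ L) ^ (-α) := by
    rw [← Real.rpow_natCast_mul hd0.le, mul_comm β, hℓ₀, mul_neg, mul_comm]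
  have hq : ∀ k, 1 ≤ k → k ≤ L → ∀ t, μ.real {ω | F k t ω = true} ≤ ((d : ℝ) ^ L) ^ (-α) := by
    intro k hk1 hkL t
    rw [measureReal_def, hprob k hk1 hkL t, ENNReal.toReal_ofReal (by split_ifs <;> positivity),
      ← hp]
    exact constrainedFlipProb_le (by exact_mod_cast (by omega : 1 ≤ d)) (by linarith)
  calc ∫ ω, (activeCount d F L ω : ℝ) ∂μ ≤ (d : ℝ) ^ L * (L * ((d : ℝ) ^ L) ^ (-α)) :=
        integral_activeCount_le μ hmeas hq
    _ = L * ((d : ℝ) ^ L) ^ (1 - α) := by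
        rw [Real.rpow_sub (by positivity), Real.rpow_one, Real.rpow_neg (by positivity)]
        ring
    _ ≤ ((L : ℝ) + 1) * ((d : ℝ) ^ L) ^ (1 - α) := by gcongr; linarith

/-- In the constrained tree Ising model with `ℓ₀ = (α/β)L`,
`0 < α < β ≤ 1`, the expected number of active leaves satisfies
`E‖x‖₀ ≤ (L+1) p^{1-α} = (log_d p + 1) p^{1-α}`, where `p = d^L`. -/
theorem constrained_ising_expected_sparsity_upper (d : ℕ) (hd : 2 ≤ d) (α β : ℝ)
    (hα : 0 < α) (hαβ : α < β) (hβ : β ≤ 1) :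
    ∀ L ℓ₀ : ℕ, (ℓ₀ : ℝ) * β = α * L →
      ∀ (Ω : Type) (mΩ : MeasurableSpace Ω) (μ : Measure Ω), IsProbabilityMeasure μ →
      ∀ F : (ℓ : ℕ) → (Fin ℓ → Fin d) → Ω → Bool, IsConstrainedFlipModel d L ℓ₀ β μ F →
        ∫ ω, (activeCount d F L ω : ℝ) ∂μ ≤ ((L : ℝ) + 1) * ((d : ℝ) ^ L) ^ (1 - α) :=
  constrained_ising_expected_sparsity_upper_general d hd α β hα hαβ
end

section
/- Let $\mathbb B$ be a $p \times p$ real orthogonal matrix with columns $\mathbf b_1,\dots,\mathbf b_p$, and let $\mathbf x \in \{0,1\}^p$ be a nonzero binary vector. Then $\max_{1 \leq i \leq p} |\mathbf b_i^T \mathbf x| \geq \sqrt{\frac{\|\mathbf x\|_0}{\|\mathbb B^T \mathbf x\|_0}}$, where $\|\mathbf v\|_0$ denotes the number of nonzero entries of $\mathbf v$. -/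
open Finset

/-- For a `p × p` real orthogonal matrix `B` with columns `b_i` and a
nonzero binary vector `x ∈ {0,1}^p`,
`max_i |b_iᵀ x| ≥ √(‖x‖₀ / ‖Bᵀx‖₀)`, where `‖·‖₀` counts nonzero entries. -/
theorem max_transform_coeff_lower_bound {p : ℕ} (hp : 0 < p)
    (B : Matrix (Fin p) (Fin p) ℝ) (hB : B.transpose * B = 1)
    (x : Fin p → ℝ) (hx01 : ∀ i, x i = 0 ∨ x i = 1) (hx : x ≠ 0) :
    Real.sqrt ((((Finset.univ.filter fun i => x i ≠ 0).card : ℝ)) /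
        ((Finset.univ.filter fun i => (∑ j, B j i * x j) ≠ 0).card : ℝ)) ≤
      Finset.univ.sup' (Finset.univ_nonempty_iff.mpr ⟨⟨0, hp⟩⟩)
        (fun i => |∑ j, B j i * x j|) := by
  classical
  set c : Fin p → ℝ := fun i => ∑ j, B j i * x j with hcdef
  have hBBt : B * B.transpose = 1 := by rwa [mul_eq_one_comm] at hB
  -- energy identity
  have hBB : ∀ j k, ∑ i, B j i * B k i = if j = k then (1:ℝ) else 0 := by
    intro j k
    have := congrFun (congrFun hBBt j) k
    simpa [Matrix.mul_apply, Matrix.transpose_apply, Matrix.one_apply] using this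
  have hsum : ∑ i, c i * c i = ∑ j, x j * x j := by
    have key : ∀ i, c i * c i = ∑ j, ∑ k, x j * x k * (B j i * B k i) := by
      intro i
      simp only [hcdef]
      rw [Finset.sum_mul_sum]
      exact Finset.sum_congr rfl fun j _ => Finset.sum_congr rfl fun k _ => by ring
    simp only [key]
    rw [Finset.sum_comm]
    refine Finset.sum_congr rfl fun j _ => ?_
    rw [Finset.sum_comm]
    have h2 : ∀ k, ∑ i, x j * x k * (B j i * B k i) = x j * x k * (if j = k then (1:ℝ) else 0) := by
      intro k
      rw [← Finset.mul_sum, hBB j k]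
    simp only [h2, mul_ite, mul_one, mul_zero]
    simp [Finset.sum_ite_eq]
  have hxsum : ∑ j, x j * x j = ((Finset.univ.filter fun i => x i ≠ 0).card : ℝ) := by
    rw [Finset.card_filter]
    push_cast
    refine Finset.sum_congr rfl fun j _ => ?_
    rcases hx01 j with h | h <;> simp [h]
  set n : ℝ := ((Finset.univ.filter fun i => x i ≠ 0).card : ℝ) with hn
  set T : Finset (Fin p) := Finset.univ.filter fun i => c i ≠ 0 with hT
  set k : ℝ := (T.card : ℝ) with hk
  set M : ℝ := Finset.univ.sup' (Finset.univ_nonempty_iff.mpr ⟨⟨0, hp⟩⟩)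
      (fun i => |c i|) with hM
  have hMnonneg : 0 ≤ M := by
    exact le_trans (abs_nonneg (c ⟨0, hp⟩))
      (Finset.le_sup' (f := fun i => |c i|) (Finset.mem_univ ⟨0, hp⟩))
  have hnpos : 0 < n := by
    have : (Finset.univ.filter fun i => x i ≠ 0).Nonempty := by
      obtain ⟨j, hj⟩ := Function.ne_iff.mp hx
      exact ⟨j, by simpa using hj⟩
    have := Finset.card_pos.mpr this
    rw [hn]; exact_mod_cast this
  have hsumT : ∑ i ∈ T, c i * c i = n := by
    rw [← hsum.trans hxsum, hT]
    refine Finset.sum_subset (Finset.filter_subset _ _) ?_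
    intro i _ hi
    have : c i = 0 := by
      by_contra h; exact hi (Finset.mem_filter.mpr ⟨Finset.mem_univ _, h⟩)
    simp [this]
  have hkpos : 0 < k := by
    rcases Finset.eq_empty_or_nonempty T with h | h
    · rw [h] at hsumT; simp at hsumT; rw [← hsumT] at hnpos; exact absurd hnpos (lt_irrefl 0)
    · have := Finset.card_pos.mpr h
      rw [hk]; exact_mod_cast this
  have hbound : n ≤ k * M ^ 2 := by
    rw [← hsumT, hk]
    calc ∑ i ∈ T, c i * c i ≤ ∑ i ∈ T, M ^ 2 := by
          refine Finset.sum_le_sum fun i _ => ?_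
          have h1 : |c i| ≤ M := Finset.le_sup' (f := fun i => |c i|) (Finset.mem_univ i)
          calc c i * c i = |c i| * |c i| := (abs_mul_abs_self _).symm
            _ ≤ M * M := mul_le_mul h1 h1 (abs_nonneg _) hMnonneg
            _ = M ^ 2 := (sq M).symm
      _ = (T.card : ℝ) * M ^ 2 := by rw [Finset.sum_const, nsmul_eq_mul]
  have hdiv : n / k ≤ M ^ 2 := (div_le_iff₀ hkpos).mpr (by linarith)
  calc Real.sqrt (n / k) ≤ Real.sqrt (M ^ 2) := Real.sqrt_le_sqrt hdiv
    _ = M := by rw [Real.sqrt_sq hMnonneg]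
end

section
/- Fix $0 < \alpha < \beta \leq 1$, an integer $d \geq 2$, $\sigma > 0$, and constants $c_1, c_2 > 0$. For each $p$ in an increasing sequence, let $\mathbf x^{(p)} \in \{0,1\}^p$ be a nonzero pattern satisfying $\|\mathbf x^{(p)}\|_0 \geq c_1 p^{1-\alpha}$, let $\mathbb B_p$ be a $p\times p$ orthogonal matrix satisfying $\|\mathbb B_p^T \mathbf x^{(p)}\|_0 \leq c_2 (\log_d p)^2 p^{1-\beta}$, and let $\mathbf y = \mu_p \mathbf x^{(p)} + \boldsymbol\epsilon$ with $\boldsymbol\epsilon$ having i.i.d. $\mathcal N(0,\sigma^2)$ entries. Fix $c > 0$ and consider the test that declares a signal present when $\max_i |\mathbf b_i^T \mathbf y| > t_p$ with $t_p = \sqrt{2\sigma^2(1+c)\log p}$. Then the false alarm probability (under $\mu_p = 0$) tends to $0$ as $p \to \infty$, and for every $\kappa' \in (0, (\beta-\alpha)/2)$, if $\mu_p \geq p^{-\kappa'}\sqrt{2\sigma^2\log p}$ for all $p$, the miss probability (under signal present) also tends to $0$ as $p \to \infty$. In particular, signals with strength polynomially below the canonical-domain detection threshold $\sqrt{2\sigma^2\log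 p}$ are reliably detectable. -/
open MeasureTheory ProbabilityTheory Finset Filter Real
open scoped ENNReal NNReal Matrix

/-!
Every transform coefficient `∑ j, B j i * ε j` of the noise is a unit-norm combination of
independent `N(0, σ²)` variables, hence sub-Gaussian with variance proxy `σ²`, so it exceeds `t`
in absolute value with probability at most `2 exp (-t² / 2σ²)`. A union bound over the `p`
coefficients at `t = t_p` bounds the false-alarm probability by `2 p^(-c)`.

For the miss probability, orthogonality preserves energy: `∑ i, (bᵢᵀ x)² = ‖x‖₀`, and this energy
sits on at most `‖Bᵀ x‖₀` coefficients, so some coefficient has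
`(bᵢᵀ x)² ≥ ‖x‖₀ / ‖Bᵀ x‖₀ ≳ p^(β - α) / log² p`. At that coefficient the signal `μ_p |bᵢᵀ x|`
exceeds `t_p` by a margin of order `p^((β - α)/2 - κ') / √(log p) → ∞`, and a miss forces the
noise coefficient to make up that margin.
-/

section Subgaussian

variable {Ω : Type*} [MeasurableSpace Ω] {μ : Measure Ω}

lemma hasSubgaussianMGF_of_map_eq_gaussianReal [IsProbabilityMeasure μ] {X : Ω → ℝ} {v : ℝ≥0}
    (hX : μ.map X = gaussianReal 0 v) : HasSubgaussianMGF X v μ where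
  integrable_exp_mul t := by
    rw [← mgf_pos_iff, mgf_gaussianReal hX]
    exact exp_pos _
  mgf_le t := by rw [mgf_gaussianReal hX, zero_mul, zero_add]

lemma ProbabilityTheory.HasSubgaussianMGF.measure_le_abs_le [IsFiniteMeasure μ] {X : Ω → ℝ}
    {v : ℝ≥0} (h : HasSubgaussianMGF X v μ) {u : ℝ} (hu : 0 ≤ u) :
    μ {ω | u ≤ |X ω|} ≤ ENNReal.ofReal (2 * exp (-u ^ 2 / (2 * v))) := by
  have tail : ∀ {Y : Ω → ℝ}, HasSubgaussianMGF Y v μ →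
      μ {ω | u ≤ Y ω} ≤ ENNReal.ofReal (exp (-u ^ 2 / (2 * v))) := fun hY =>
    (ENNReal.le_ofReal_iff_toReal_le (measure_ne_top _ _) (exp_nonneg _)).2 (hY.measure_ge_le hu)
  calc μ {ω | u ≤ |X ω|} ≤ μ ({ω | u ≤ X ω} ∪ {ω | u ≤ (-X) ω}) :=
        measure_mono fun ω (hω : u ≤ |X ω|) => le_abs.mp hω
    _ ≤ μ {ω | u ≤ X ω} + μ {ω | u ≤ (-X) ω} := measure_union_le _ _
    _ ≤ ENNReal.ofReal (exp (-u ^ 2 / (2 * v))) + ENNReal.ofReal (exp (-u ^ 2 / (2 * v))) :=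
        add_le_add (tail h) (tail h.neg)
    _ = ENNReal.ofReal (2 * exp (-u ^ 2 / (2 * v))) := by
        rw [← ENNReal.ofReal_add (exp_nonneg _) (exp_nonneg _), ← two_mul]

lemma hasSubgaussianMGF_sum_mul_of_iIndepFun {ι : Type*} [Fintype ι] {ε : ι → Ω → ℝ} {v : ℝ≥0}
    (hindep : iIndepFun ε μ) (hε : ∀ j, HasSubgaussianMGF (ε j) v μ) {a : ι → ℝ}
    (ha : ∑ j, a j ^ 2 = 1) : HasSubgaussianMGF (fun ω => ∑ j, a j * ε j ω) v μ := by
  have h := HasSubgaussianMGF.sum_of_iIndepFun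
    (hindep.comp (fun j x => a j * x) fun j => measurable_const_mul (a j)) (s := univ)
    fun j _ => (hε j).const_mul (a j)
  convert h using 1
  · rfl
  apply NNReal.eq
  rw [NNReal.coe_sum]
  change (v : ℝ) = ∑ i, a i ^ 2 * v
  rw [← sum_mul, ha, one_mul]

end Subgaussian

section Detection

variable {Ω ι : Type*} [MeasurableSpace Ω] {μ : Measure Ω} [Fintype ι]
  {ε : ι → Ω → ℝ} {v : ℝ≥0} {B : Matrix ι ι ℝ}

lemma measure_lt_iSup_le_sum [Nonempty ι] (f : ι → Ω → ℝ) (t : ℝ) :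
    μ {ω | t < ⨆ i, f i ω} ≤ ∑ i, μ {ω | t ≤ f i ω} :=
  calc μ {ω | t < ⨆ i, f i ω} ≤ μ (⋃ i, {ω | t ≤ f i ω}) :=
        measure_mono fun ω (hω : t < ⨆ i, f i ω) => by
          obtain ⟨i, hi⟩ := (lt_ciSup_iff (Set.finite_range _).bddAbove).mp hω
          exact Set.mem_iUnion.mpr ⟨i, hi.le⟩
    _ ≤ ∑ i, μ {ω | t ≤ f i ω} := measure_iUnion_fintype_le _ _

theorem measure_lt_iSup_abs_sum_mul_le [IsFiniteMeasure μ] [Nonempty ι] (hindep : iIndepFun ε μ)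
    (hε : ∀ j, HasSubgaussianMGF (ε j) v μ) (hB : ∀ i, ∑ j, B j i ^ 2 = 1) {t : ℝ} (ht : 0 ≤ t) :
    μ {ω | t < ⨆ i, |∑ j, B j i * ε j ω|} ≤
      ENNReal.ofReal (Fintype.card ι * (2 * exp (-t ^ 2 / (2 * v)))) :=
  calc μ {ω | t < ⨆ i, |∑ j, B j i * ε j ω|} ≤ ∑ i, μ {ω | t ≤ |∑ j, B j i * ε j ω|} :=
        measure_lt_iSup_le_sum _ t
    _ ≤ ∑ _i : ι, ENNReal.ofReal (2 * exp (-t ^ 2 / (2 * v))) := sum_le_sum fun i _ =>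
        (hasSubgaussianMGF_sum_mul_of_iIndepFun hindep hε (hB i)).measure_le_abs_le ht
    _ = ENNReal.ofReal (Fintype.card ι * (2 * exp (-t ^ 2 / (2 * v)))) := by
        rw [sum_const, card_univ, nsmul_eq_mul, ENNReal.ofReal_mul (Nat.cast_nonneg _),
          ENNReal.ofReal_natCast]

theorem measure_iSup_abs_sum_mul_add_le [IsFiniteMeasure μ] (hindep : iIndepFun ε μ)
    (hε : ∀ j, HasSubgaussianMGF (ε j) v μ) (hB : ∀ i, ∑ j, B j i ^ 2 = 1) (s : ι → ℝ) (i₀ : ι)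
    {t w : ℝ} (hw : 0 ≤ w) (hs : t + w ≤ |∑ j, B j i₀ * s j|) :
    μ {ω | (⨆ i, |∑ j, B j i * (s j + ε j ω)|) ≤ t} ≤
      ENNReal.ofReal (2 * exp (-w ^ 2 / (2 * v))) := by
  refine le_trans (measure_mono fun ω (hω : _ ≤ t) => ?_)
    ((hasSubgaussianMGF_sum_mul_of_iIndepFun hindep hε (hB i₀)).measure_le_abs_le hw)
  have hi₀ : |∑ j, B j i₀ * s j + ∑ j, B j i₀ * ε j ω| ≤ t := by
    rw [← sum_add_distrib]
    simp only [← mul_add]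
    exact (le_ciSup (Set.finite_range _).bddAbove i₀).trans hω
  have htri := abs_sub_abs_le_abs_sub (∑ j, B j i₀ * s j)
    (∑ j, B j i₀ * s j + ∑ j, B j i₀ * ε j ω)
  rw [sub_add_cancel_left, abs_neg] at htri
  show w ≤ |∑ j, B j i₀ * ε j ω|
  linarith

end Detection

lemma Matrix.sum_sq_apply_col_eq_one {ι : Type*} [Fintype ι] [DecidableEq ι] {B : Matrix ι ι ℝ}
    (hB : Bᵀ * B = 1) (i : ι) : ∑ j, B j i ^ 2 = 1 := by
  simpa [Matrix.mul_apply, sq] using congrFun (congrFun hB i) i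

lemma exists_sum_sq_div_le_sq {ι : Type*} [Fintype ι] [Nonempty ι] (v : ι → ℝ) {K : ℝ}
    (hK : (#{i | v i ≠ 0} : ℝ) ≤ K) : ∃ i, (∑ j, v j ^ 2) / K ≤ v i ^ 2 := by
  set S : Finset ι := {i | v i ≠ 0}
  have hsum : ∑ j ∈ S, v j ^ 2 = ∑ j, v j ^ 2 :=
    sum_filter_of_ne fun i _ hi h => hi (by simp [h])
  rcases S.eq_empty_or_nonempty with hS | hS
  · refine ⟨Classical.arbitrary ι, ?_⟩
    rw [← hsum, hS, sum_empty, zero_div]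
    positivity
  · have hcard : (0 : ℝ) < #S := by exact_mod_cast hS.card_pos
    obtain ⟨i, -, hi⟩ := exists_le_of_sum_le hS (f := fun _ => (∑ j, v j ^ 2) / #S)
      (g := fun j => v j ^ 2) (by rw [sum_const, nsmul_eq_mul, mul_div_cancel₀ _ hcard.ne', hsum])
    exact ⟨i, (div_le_div_of_nonneg_left (by positivity) hcard hK).trans hi⟩

lemma dotProduct_self_eq_card_ne_zero {ι : Type*} [Fintype ι] {x : ι → ℝ}
    (hx : ∀ i, x i = 0 ∨ x i = 1) : x ⬝ᵥ x = #{i | x i ≠ 0} := by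
  rw [dotProduct, ← sum_boole]
  refine sum_congr rfl fun i _ => ?_
  rcases hx i with h | h <;> simp [h]

lemma Matrix.transpose_mulVec_dotProduct_self {ι : Type*} [Fintype ι] [DecidableEq ι]
    {B : Matrix ι ι ℝ} (hB : Bᵀ * B = 1) (x : ι → ℝ) : Bᵀ *ᵥ x ⬝ᵥ Bᵀ *ᵥ x = x ⬝ᵥ x := by
  rw [Matrix.dotProduct_mulVec, Matrix.vecMul_transpose, Matrix.mulVec_mulVec,
    mul_eq_one_comm.mp hB, Matrix.one_mulVec]

theorem Matrix.exists_mul_sqrt_div_le_abs_transpose_mulVec {ι : Type*} [Fintype ι] [DecidableEq ι]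
    [Nonempty ι] {B : Matrix ι ι ℝ} (hB : Bᵀ * B = 1) {x : ι → ℝ} (hx : ∀ i, x i = 0 ∨ x i = 1)
    {N K m₀ m : ℝ} (hN : N ≤ #{i | x i ≠ 0}) (hK : #{i | (Bᵀ *ᵥ x) i ≠ 0} ≤ K)
    (hm₀ : 0 ≤ m₀) (hm : m₀ ≤ m) : ∃ i, m₀ * √(N / K) ≤ |(Bᵀ *ᵥ (m • x)) i| := by
  obtain ⟨i, hi⟩ := exists_sum_sq_div_le_sq (Bᵀ *ᵥ x) hK
  have hK0 : 0 ≤ K := (Nat.cast_nonneg _).trans hK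
  have hsum : ∑ j, (Bᵀ *ᵥ x) j ^ 2 = #{i | x i ≠ 0} := by
    simp only [sq]
    exact (transpose_mulVec_dotProduct_self hB x).trans (dotProduct_self_eq_card_ne_zero hx)
  have hcoeff : √(N / K) ≤ |(Bᵀ *ᵥ x) i| := by
    rw [← sqrt_sq_eq_abs]
    exact sqrt_le_sqrt ((div_le_div_of_nonneg_right hN hK0).trans (hsum ▸ hi))
  refine ⟨i, ?_⟩
  rw [Matrix.mulVec_smul, Pi.smul_apply, smul_eq_mul, abs_mul, abs_of_nonneg (hm₀.trans hm)]
  exact mul_le_mul hm hcoeff (sqrt_nonneg _) (hm₀.trans hm)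

lemma tendsto_rpow_div_log_atTop {δ : ℝ} (hδ : 0 < δ) :
    Tendsto (fun x : ℝ => x ^ δ / log x) atTop atTop := by
  refine tendsto_atTop_mono' atTop ?_
    ((tendsto_rpow_atTop (half_pos hδ)).const_mul_atTop (half_pos hδ))
  filter_upwards [eventually_gt_atTop 1] with x hx
  have hx0 : 0 < x := one_pos.trans hx
  rw [le_div_iff₀ (log_pos hx)]
  calc δ / 2 * x ^ (δ / 2) * log x ≤ δ / 2 * x ^ (δ / 2) * (x ^ (δ / 2) / (δ / 2)) := by
        gcongr
        exact log_le_rpow_div hx0.le (half_pos hδ)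
    _ = x ^ δ := by
        rw [← add_halves δ, rpow_add hx0, add_halves]
        field_simp

lemma tendsto_mul_rpow_div_sqrt_log_sub_atTop {A δ : ℝ} (hA : 0 < A) (hδ : 0 < δ) (D : ℝ) :
    Tendsto (fun x : ℝ => A * x ^ δ / √(log x) - D * √(log x)) atTop atTop := by
  refine ((tendsto_sqrt_atTop.comp tendsto_log_atTop).atTop_mul_atTop₀
    (tendsto_atTop_add_const_right _ (-D)
      ((tendsto_rpow_div_log_atTop hδ).const_mul_atTop hA))).congr' ?_
  filter_upwards [eventually_gt_atTop 1] with x hx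
  have hs : √(log x) ^ 2 = log x := sq_sqrt (log_pos hx).le
  have hs0 : 0 < √(log x) := sqrt_pos.2 (log_pos hx)
  simp only [Function.comp_apply]
  field_simp
  rw [hs]
  field_simp [(log_pos hx).ne']
  ring

lemma rpow_mul_sqrt_mul_sqrt_div_eq {x d σ c₁ c₂ α β κ' : ℝ} (hx : 1 < x) (hd : 1 ≤ d)
    (hc : 0 ≤ c₁ / c₂) :
    x ^ (-κ') * √(2 * σ ^ 2 * log x) *
        √(c₁ * x ^ (1 - α) / (c₂ * (log x / log d) ^ 2 * x ^ (1 - β))) =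
      √(2 * σ ^ 2 * (c₁ / c₂)) * log d * x ^ ((β - α) / 2 - κ') / √(log x) := by
  have hx0 : 0 < x := one_pos.trans hx
  have hL := log_pos hx
  have hpow : x ^ (1 - α) = (x ^ ((β - α) / 2)) ^ 2 * x ^ (1 - β) := by
    rw [← rpow_natCast, ← rpow_mul hx0.le, ← rpow_add hx0]
    ring_nf
  have hfrac : c₁ * x ^ (1 - α) / (c₂ * (log x / log d) ^ 2 * x ^ (1 - β)) =
      c₁ / c₂ * (log d * x ^ ((β - α) / 2) / log x) ^ 2 := by
    rw [hpow]
    field_simp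
  have hcoeff : 0 ≤ log d * x ^ ((β - α) / 2) / log x := by
    have := log_nonneg hd
    positivity
  rw [hfrac, sqrt_mul hc, sqrt_sq hcoeff, sqrt_mul' _ hL.le, sqrt_mul' _ hc,
    show (β - α) / 2 - κ' = -κ' + (β - α) / 2 by ring, rpow_add hx0]
  have hs : √(log x) ^ 2 = log x := sq_sqrt hL.le
  field_simp
  rw [hs]
  ring

-- The first term bounds the largest transform coefficient of the scaled signal from below.
lemma tendsto_detection_margin {d σ c₁ c₂ α β κ' : ℝ} (hd : 1 < d) (hσ : σ ≠ 0)
    (hc₁ : 0 < c₁) (hc₂ : 0 < c₂) (hκ' : κ' < (β - α) / 2) (T : ℝ) :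
    Tendsto (fun p : ℕ => (p : ℝ) ^ (-κ') * √(2 * σ ^ 2 * log p) *
        √(c₁ * (p : ℝ) ^ (1 - α) / (c₂ * (log p / log d) ^ 2 * (p : ℝ) ^ (1 - β))) -
        √(T * log p)) atTop atTop := by
  have hA : 0 < √(2 * σ ^ 2 * (c₁ / c₂)) * log d :=
    mul_pos (sqrt_pos.2 (by positivity)) (log_pos hd)
  refine ((tendsto_mul_rpow_div_sqrt_log_sub_atTop hA (sub_pos.2 hκ') √T).comp
    tendsto_natCast_atTop_atTop).congr' ?_
  filter_upwards [eventually_gt_atTop 1] with p hp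
  have hp' : (1 : ℝ) < p := by exact_mod_cast hp
  rw [Function.comp_apply, rpow_mul_sqrt_mul_sqrt_div_eq hp' hd.le (by positivity),
    sqrt_mul' _ (log_pos hp').le]

lemma tendsto_card_mul_gaussian_tail {σ c : ℝ} (hσ : σ ≠ 0) (hc : 0 < c) :
    Tendsto (fun p : ℕ => ENNReal.ofReal
      (p * (2 * exp (-√(2 * σ ^ 2 * (1 + c) * log p) ^ 2 / (2 * σ ^ 2))))) atTop (nhds 0) := by
  have h : Tendsto (fun p : ℕ => 2 * (p : ℝ) ^ (-c)) atTop (nhds 0) := by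
    simpa using ((tendsto_rpow_neg_atTop hc).comp tendsto_natCast_atTop_atTop).const_mul 2
  refine ENNReal.ofReal_zero ▸ (ENNReal.tendsto_ofReal h).congr' ?_
  filter_upwards [eventually_gt_atTop 0] with p hp
  have hp0 : (0 : ℝ) < p := by exact_mod_cast hp
  have hlog : 0 ≤ log p := log_nonneg (by exact_mod_cast hp)
  have hexp : -(2 * σ ^ 2 * (1 + c) * log p) / (2 * σ ^ 2) = log p * (-1 + -c) := by
    field_simp
    ring
  rw [sq_sqrt (by positivity), hexp, ← rpow_def_of_pos hp0, rpow_add hp0, rpow_neg_one]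
  field_simp

lemma tendsto_ofReal_two_mul_exp_neg_sq_div {α : Type*} {l : Filter α} {w : α → ℝ}
    (hw : Tendsto w l atTop) {v : ℝ} (hv : 0 < v) :
    Tendsto (fun a => ENNReal.ofReal (2 * exp (-w a ^ 2 / (2 * v)))) l (nhds 0) := by
  have h : Tendsto (fun a => -w a ^ 2 / (2 * v)) l atBot := by
    simp_rw [neg_div]
    exact tendsto_neg_atTop_atBot.comp
      ((tendsto_pow_atTop two_ne_zero).comp hw |>.atTop_div_const (by positivity))
  simpa using ENNReal.tendsto_ofReal ((tendsto_exp_atBot.comp h).const_mul 2)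

theorem weak_structured_signal_detection_general (d : ℕ) (hd : 2 ≤ d)
    (α β σ c₁ c₂ c κ' : ℝ)
    (hσ : 0 < σ)
    (hc₁ : 0 < c₁) (hc₂ : 0 < c₂) (hc : 0 < c)
    (hκ' : κ' < (β - α) / 2)
    (Ω : ℕ → Type) (mΩ : ∀ p, MeasurableSpace (Ω p)) (μ : ∀ p, Measure (Ω p))
    (hprob : ∀ p, IsProbabilityMeasure (μ p))
    (ε : ∀ p : ℕ, Fin p → Ω p → ℝ)
    (hindep : ∀ p, iIndepFun (ε p) (μ p))
    (hdist : ∀ p i, Measure.map (ε p i) (μ p) = gaussianReal 0 ⟨σ ^ 2, sq_nonneg σ⟩)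
    (x : ∀ p : ℕ, Fin p → ℝ) (hx01 : ∀ p i, x p i = 0 ∨ x p i = 1)
    (hxlb : ∀ p : ℕ, 1 ≤ p →
      c₁ * (p : ℝ) ^ (1 - α) ≤ ((Finset.univ.filter fun i => x p i ≠ 0).card : ℝ))
    (B : ∀ p : ℕ, Matrix (Fin p) (Fin p) ℝ) (hB : ∀ p, (B p).transpose * B p = 1)
    (hBx : ∀ p : ℕ, 2 ≤ p →
      ((Finset.univ.filter fun i => (∑ j, B p j i * x p j) ≠ 0).card : ℝ) ≤
        c₂ * (Real.log p / Real.log d) ^ 2 * (p : ℝ) ^ (1 - β))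
    (μsig : ℕ → ℝ)
    (hμsig : ∀ p : ℕ, 2 ≤ p →
      (p : ℝ) ^ (-κ') * Real.sqrt (2 * σ ^ 2 * Real.log p) ≤ μsig p) :
    Tendsto (fun p : ℕ =>
        μ p {ω | Real.sqrt (2 * σ ^ 2 * (1 + c) * Real.log p) <
            ⨆ i : Fin p, |∑ j, B p j i * ε p j ω|}) atTop (nhds 0) ∧
    Tendsto (fun p : ℕ =>
        μ p {ω | (⨆ i : Fin p, |∑ j, B p j i * (μsig p * x p j + ε p j ω)|) ≤
            Real.sqrt (2 * σ ^ 2 * (1 + c) * Real.log p)}) atTop (nhds 0) := by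
  have hsubG : ∀ p j, HasSubgaussianMGF (ε p j) ⟨σ ^ 2, sq_nonneg σ⟩ (μ p) := fun p j =>
    haveI := hprob p
    hasSubgaussianMGF_of_map_eq_gaussianReal (hdist p j)
  have hcol : ∀ p i, ∑ j, B p j i ^ 2 = 1 := fun p => Matrix.sum_sq_apply_col_eq_one (hB p)
  have hmargin := tendsto_detection_margin (d := d) (by exact_mod_cast (by omega : 1 < d))
    hσ.ne' hc₁ hc₂ hκ' (2 * σ ^ 2 * (1 + c))
  constructor
  · refine tendsto_of_tendsto_of_tendsto_of_le_of_le' tendsto_const_nhds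
      (tendsto_card_mul_gaussian_tail hσ.ne' hc) (.of_forall fun _ => zero_le) ?_
    filter_upwards [eventually_gt_atTop 0] with p hp
    have := hprob p
    have : Nonempty (Fin p) := ⟨⟨0, hp⟩⟩
    refine (measure_lt_iSup_abs_sum_mul_le (hindep p) (hsubG p) (hcol p)
      (sqrt_nonneg _)).trans_eq ?_
    rw [Fintype.card_fin]
    rfl
  · refine tendsto_of_tendsto_of_tendsto_of_le_of_le' tendsto_const_nhds
      (tendsto_ofReal_two_mul_exp_neg_sq_div hmargin (by positivity : 0 < σ ^ 2))
      (.of_forall fun _ => zero_le) ?_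
    filter_upwards [eventually_ge_atTop 2, hmargin.eventually_ge_atTop 0] with p hp hw
    have := hprob p
    have : Nonempty (Fin p) := ⟨⟨0, by omega⟩⟩
    obtain ⟨i₀, hi₀⟩ := Matrix.exists_mul_sqrt_div_le_abs_transpose_mulVec (hB p) (hx01 p)
      (hxlb p (by omega)) (hBx p hp) (by positivity) (hμsig p hp)
    exact measure_iSup_abs_sum_mul_add_le (hindep p) (hsubG p) (hcol p) _ i₀ hw
      (by rw [add_sub_cancel]; exact hi₀)

/-- **Theorem 3.** Suppose for each `p` the nonzero binary pattern `x⁽ᵖ⁾`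
has canonical sparsity `‖x⁽ᵖ⁾‖₀ ≥ c₁ p^{1-α}`, the orthogonal matrix `B_p` gives transform
sparsity `‖B_pᵀ x⁽ᵖ⁾‖₀ ≤ c₂ (log_d p)² p^{1-β}` (with `0 < α < β ≤ 1`), and
`y = μ_p x⁽ᵖ⁾ + ε` with `ε` i.i.d. `N(0,σ²)`.  For the max-statistic test with threshold
`t_p = √(2σ²(1+c) log p)`, the false-alarm probability tends to `0`, and if
`μ_p ≥ p^{-κ'} √(2σ² log p)` for some `κ' ∈ (0,(β-α)/2)`, the miss probability also tends
to `0`: signals polynomially weaker than the canonical threshold `√(2σ² log p)` are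
reliably detected. -/
theorem weak_structured_signal_detection (d : ℕ) (hd : 2 ≤ d)
    (α β σ c₁ c₂ c κ' : ℝ)
    (hα : 0 < α) (hαβ : α < β) (hβ : β ≤ 1) (hσ : 0 < σ)
    (hc₁ : 0 < c₁) (hc₂ : 0 < c₂) (hc : 0 < c)
    (hκ'0 : 0 < κ') (hκ' : κ' < (β - α) / 2)
    (Ω : ℕ → Type) (mΩ : ∀ p, MeasurableSpace (Ω p)) (μ : ∀ p, Measure (Ω p))
    (hprob : ∀ p, IsProbabilityMeasure (μ p))
    (ε : ∀ p : ℕ, Fin p → Ω p → ℝ) (hmeas : ∀ p i, Measurable (ε p i))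
    (hindep : ∀ p, iIndepFun (ε p) (μ p))
    (hdist : ∀ p i, Measure.map (ε p i) (μ p) = gaussianReal 0 ⟨σ ^ 2, sq_nonneg σ⟩)
    (x : ∀ p : ℕ, Fin p → ℝ) (hx01 : ∀ p i, x p i = 0 ∨ x p i = 1)
    (hxlb : ∀ p : ℕ, 1 ≤ p →
      c₁ * (p : ℝ) ^ (1 - α) ≤ ((Finset.univ.filter fun i => x p i ≠ 0).card : ℝ))
    (B : ∀ p : ℕ, Matrix (Fin p) (Fin p) ℝ) (hB : ∀ p, (B p).transpose * B p = 1)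
    (hBx : ∀ p : ℕ, 2 ≤ p →
      ((Finset.univ.filter fun i => (∑ j, B p j i * x p j) ≠ 0).card : ℝ) ≤
        c₂ * (Real.log p / Real.log d) ^ 2 * (p : ℝ) ^ (1 - β))
    (μsig : ℕ → ℝ)
    (hμsig : ∀ p : ℕ, 2 ≤ p →
      (p : ℝ) ^ (-κ') * Real.sqrt (2 * σ ^ 2 * Real.log p) ≤ μsig p) :
    Tendsto (fun p : ℕ =>
        μ p {ω | Real.sqrt (2 * σ ^ 2 * (1 + c) * Real.log p) <
            ⨆ i : Fin p, |∑ j, B p j i * ε p j ω|}) atTop (nhds 0) ∧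
    Tendsto (fun p : ℕ =>
        μ p {ω | (⨆ i : Fin p, |∑ j, B p j i * (μsig p * x p j + ε p j ω)|) ≤
            Real.sqrt (2 * σ ^ 2 * (1 + c) * Real.log p)}) atTop (nhds 0) :=
  weak_structured_signal_detection_general d hd α β σ c₁ c₂ c κ' hσ hc₁ hc₂ hc hκ' Ω mΩ μ hprob ε
    hindep hdist x hx01 hxlb B hB hBx μsig hμsig
end
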